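/- Adequacy of the anti-sequent calculus R_F for the four-valued logic F: an F-anti-sequent Γ₁ ∤ Γ₂ ∤ Γ₃ ∤ Γ₄ is provable in R_F if and only if it is refutable. -/

import Mathlib

/-- Truth values of the four-valued logic F: f, n, b, t, where in the truth
order f is least, t is greatest, and n, b are incomparable. -/
inductive V4 : Type
  | f | n | b | t
deriving DecidableEq, Repr

namespace V4

/-- Negation: f ↦ t, t ↦ f, and n, b are fixed. -/
def negv : V4 → V4
  | .f => .t
  | .t => .f
  | .n => .n
  | .b => .b

/-- Conjunction: the meet with respect to the truth order (f least, t
greatest, n and b incomparable, so the meet of n and b is f). -/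
def conjv : V4 → V4 → V4
  | .t, y => y
  | .f, _ => .f
  | .n, .t => .n
  | .n, .n => .n
  | .n, .b => .f
  | .n, .f => .f
  | .b, .t => .b
  | .b, .b => .b
  | .b, .n => .f
  | .b, .f => .f

/-- Implication: `x ⊃ y` is `y` if `x` is designated (b or t), and `t`
otherwise. -/
def impv : V4 → V4 → V4
  | .b, y => y
  | .t, y => y
  | .f, _ => .t
  | .n, _ => .t

end V4

/-- Formulas of the four-valued logic F, with atoms indexed by ℕ, the
constants B and N, negation, conjunction, and implication. -/
inductive FForm : Type
  | atom : ℕ → FForm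
  | bb : FForm
  | nn : FForm
  | neg : FForm → FForm
  | conj : FForm → FForm → FForm
  | imp : FForm → FForm → FForm
deriving DecidableEq

namespace FForm

/-- The valuation of F extending an interpretation `I : ℕ → V4`. -/
def val (I : ℕ → V4) : FForm → V4
  | atom p => I p
  | bb => .b
  | nn => .n
  | neg φ => (φ.val I).negv
  | conj φ ψ => (φ.val I).conjv (ψ.val I)
  | imp φ ψ => (φ.val I).impv (ψ.val I)

/-- `I` is an F-model of `φ`: `v_I(φ)` is designated, i.e. b or t. -/
def IsModel (I : ℕ → V4) (φ : FForm) : Prop := φ.val I = .b ∨ φ.val I = .t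

/-- `I` is an F-model of the theory `Γ`. -/
def IsModelSet (I : ℕ → V4) (Γ : Set FForm) : Prop := ∀ φ ∈ Γ, IsModel I φ

end FForm

/-- An F-anti-sequent `Γ₁ ∤ Γ₂ ∤ Γ₃ ∤ Γ₄` is refuted by `I` if no formula of
`Γ₁` takes value f, none of `Γ₂` value n, none of `Γ₃` value b, and none of
`Γ₄` value t. -/
def FAntiRefutedBy (I : ℕ → V4) (Γ₁ Γ₂ Γ₃ Γ₄ : Finset FForm) : Prop :=
  (∀ φ ∈ Γ₁, φ.val I ≠ .f) ∧ (∀ φ ∈ Γ₂, φ.val I ≠ .n) ∧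
  (∀ φ ∈ Γ₃, φ.val I ≠ .b) ∧ (∀ φ ∈ Γ₄, φ.val I ≠ .t)

/-- An F-anti-sequent is refutable if some interpretation refutes it. -/
def FAntiRefutable (Γ₁ Γ₂ Γ₃ Γ₄ : Finset FForm) : Prop :=
  ∃ I, FAntiRefutedBy I Γ₁ Γ₂ Γ₃ Γ₄

/-- A formula that is an atom or one of the constants B, N. -/
def FForm.IsBasic : FForm → Prop
  | .atom _ => True
  | .bb => True
  | .nn => True
  | _ => False

/-- The anti-sequent calculus `R_F` for the four-valued logic F (components in
the order f ∤ n ∤ b ∤ t). -/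
inductive RF : Finset FForm → Finset FForm → Finset FForm → Finset FForm → Prop
  | ax (Γ Δ Θ Ω : Finset FForm) :
      (∀ φ ∈ Γ ∪ Δ ∪ Θ ∪ Ω, φ.IsBasic) → Γ ∩ Δ ∩ Θ ∩ Ω = ∅ →
      .nn ∉ Δ → .bb ∉ Θ →
      RF Γ Δ Θ Ω
  | negF {Γ Δ Θ Ω : Finset FForm} {φ : FForm} :
      RF Γ Δ Θ (insert φ Ω) → RF (insert (.neg φ) Γ) Δ Θ Ω
  | negN {Γ Δ Θ Ω : Finset FForm} {φ : FForm} :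
      RF Γ (insert φ Δ) Θ Ω → RF Γ (insert (.neg φ) Δ) Θ Ω
  | negB {Γ Δ Θ Ω : Finset FForm} {φ : FForm} :
      RF Γ Δ (insert φ Θ) Ω → RF Γ Δ (insert (.neg φ) Θ) Ω
  | negT {Γ Δ Θ Ω : Finset FForm} {φ : FForm} :
      RF (insert φ Γ) Δ Θ Ω → RF Γ Δ Θ (insert (.neg φ) Ω)
  | conjF1 {Γ Δ Θ Ω : Finset FForm} {φ ψ : FForm} :
      RF (insert φ (insert ψ Γ)) (insert φ (insert ψ Δ)) Θ Ω →
      RF (insert (.conj φ ψ) Γ) Δ Θ Ω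
  | conjF2 {Γ Δ Θ Ω : Finset FForm} {φ ψ : FForm} :
      RF (insert φ (insert ψ Γ)) Δ (insert φ (insert ψ Θ)) Ω →
      RF (insert (.conj φ ψ) Γ) Δ Θ Ω
  | conjN1 {Γ Δ Θ Ω : Finset FForm} {φ ψ : FForm} :
      RF Γ (insert φ (insert ψ Δ)) Θ Ω → RF Γ (insert (.conj φ ψ) Δ) Θ Ω
  | conjN2 {Γ Δ Θ Ω : Finset FForm} {φ ψ : FForm} :
      RF Γ (insert φ Δ) Θ (insert φ Ω) → RF Γ (insert (.conj φ ψ) Δ) Θ Ω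
  | conjN3 {Γ Δ Θ Ω : Finset FForm} {φ ψ : FForm} :
      RF Γ (insert ψ Δ) Θ (insert ψ Ω) → RF Γ (insert (.conj φ ψ) Δ) Θ Ω
  | conjB1 {Γ Δ Θ Ω : Finset FForm} {φ ψ : FForm} :
      RF Γ Δ (insert φ (insert ψ Θ)) Ω → RF Γ Δ (insert (.conj φ ψ) Θ) Ω
  | conjB2 {Γ Δ Θ Ω : Finset FForm} {φ ψ : FForm} :
      RF Γ Δ (insert φ Θ) (insert φ Ω) → RF Γ Δ (insert (.conj φ ψ) Θ) Ω
  | conjB3 {Γ Δ Θ Ω : Finset FForm} {φ ψ : FForm} :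
      RF Γ Δ (insert ψ Θ) (insert ψ Ω) → RF Γ Δ (insert (.conj φ ψ) Θ) Ω
  | conjT1 {Γ Δ Θ Ω : Finset FForm} {φ ψ : FForm} :
      RF Γ Δ Θ (insert φ Ω) → RF Γ Δ Θ (insert (.conj φ ψ) Ω)
  | conjT2 {Γ Δ Θ Ω : Finset FForm} {φ ψ : FForm} :
      RF Γ Δ Θ (insert ψ Ω) → RF Γ Δ Θ (insert (.conj φ ψ) Ω)
  | impF1 {Γ Δ Θ Ω : Finset FForm} {φ ψ : FForm} :
      RF Γ Δ (insert φ Θ) (insert φ Ω) → RF (insert (.imp φ ψ) Γ) Δ Θ Ω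
  | impF2 {Γ Δ Θ Ω : Finset FForm} {φ ψ : FForm} :
      RF (insert ψ Γ) Δ Θ Ω → RF (insert (.imp φ ψ) Γ) Δ Θ Ω
  | impN1 {Γ Δ Θ Ω : Finset FForm} {φ ψ : FForm} :
      RF Γ Δ (insert φ Θ) (insert φ Ω) → RF Γ (insert (.imp φ ψ) Δ) Θ Ω
  | impN2 {Γ Δ Θ Ω : Finset FForm} {φ ψ : FForm} :
      RF Γ (insert ψ Δ) Θ Ω → RF Γ (insert (.imp φ ψ) Δ) Θ Ω
  | impB1 {Γ Δ Θ Ω : Finset FForm} {φ ψ : FForm} :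
      RF Γ Δ (insert φ Θ) (insert φ Ω) → RF Γ Δ (insert (.imp φ ψ) Θ) Ω
  | impB2 {Γ Δ Θ Ω : Finset FForm} {φ ψ : FForm} :
      RF Γ Δ (insert ψ Θ) Ω → RF Γ Δ (insert (.imp φ ψ) Θ) Ω
  | impT {Γ Δ Θ Ω : Finset FForm} {φ ψ : FForm} :
      RF (insert φ Γ) (insert φ Δ) Θ (insert ψ Ω) →
      RF Γ Δ Θ (insert (.imp φ ψ) Ω)


/-!
Soundness: every rule of `R_F` is preserved, read downwards, by any fixed interpretation, and an
axiom is refuted by the interpretation giving each atom the first of f, n, b, t whose component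
omits it.

Completeness: conversely, for a fixed interpretation `I` the rules for a given connective and
component are jointly invertible: by the truth tables, if `I` refutes the conclusion then it
refutes one of the premisses. Decomposing non-basic formulas while keeping `I` therefore ends in
an anti-sequent of basic formulas refuted by `I`, which is an axiom. The process terminates
because a premiss may contain each immediate subformula twice, which the weight
`w(φ ∘ ψ) = 2 w(φ) + 2 w(ψ) + 1` outweighs.
-/

namespace V4

lemma negv_ne_f_iff (a : V4) : a.negv ≠ .f ↔ a ≠ .t := by cases a <;> decide
lemma negv_ne_n_iff (a : V4) : a.negv ≠ .n ↔ a ≠ .n := by cases a <;> decide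
lemma negv_ne_b_iff (a : V4) : a.negv ≠ .b ↔ a ≠ .b := by cases a <;> decide
lemma negv_ne_t_iff (a : V4) : a.negv ≠ .t ↔ a ≠ .f := by cases a <;> decide

lemma conjv_ne_f_iff (a c : V4) : a.conjv c ≠ .f ↔
    (a ≠ .f ∧ c ≠ .f ∧ a ≠ .n ∧ c ≠ .n) ∨ (a ≠ .f ∧ c ≠ .f ∧ a ≠ .b ∧ c ≠ .b) := by
  cases a <;> cases c <;> decide
lemma conjv_ne_n_iff (a c : V4) : a.conjv c ≠ .n ↔
    (a ≠ .n ∧ c ≠ .n) ∨ (a ≠ .n ∧ a ≠ .t) ∨ (c ≠ .n ∧ c ≠ .t) := by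
  cases a <;> cases c <;> decide
lemma conjv_ne_b_iff (a c : V4) : a.conjv c ≠ .b ↔
    (a ≠ .b ∧ c ≠ .b) ∨ (a ≠ .b ∧ a ≠ .t) ∨ (c ≠ .b ∧ c ≠ .t) := by
  cases a <;> cases c <;> decide
lemma conjv_ne_t_iff (a c : V4) : a.conjv c ≠ .t ↔ a ≠ .t ∨ c ≠ .t := by
  cases a <;> cases c <;> decide

lemma impv_ne_f_iff (a c : V4) : a.impv c ≠ .f ↔ (a ≠ .b ∧ a ≠ .t) ∨ c ≠ .f := by
  cases a <;> cases c <;> decide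
lemma impv_ne_n_iff (a c : V4) : a.impv c ≠ .n ↔ (a ≠ .b ∧ a ≠ .t) ∨ c ≠ .n := by
  cases a <;> cases c <;> decide
lemma impv_ne_b_iff (a c : V4) : a.impv c ≠ .b ↔ (a ≠ .b ∧ a ≠ .t) ∨ c ≠ .b := by
  cases a <;> cases c <;> decide
lemma impv_ne_t_iff (a c : V4) : a.impv c ≠ .t ↔ a ≠ .f ∧ a ≠ .n ∧ c ≠ .t := by
  cases a <;> cases c <;> decide

end V4

namespace FForm

lemma isBasic_iff {φ : FForm} : φ.IsBasic ↔ (∃ p, φ = atom p) ∨ φ = bb ∨ φ = nn := by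
  cases φ <;> simp [IsBasic]

def weight : FForm → ℕ
  | atom _ | bb | nn => 0
  | neg φ => φ.weight + 1
  | conj φ ψ | imp φ ψ => 2 * φ.weight + 2 * ψ.weight + 1

end FForm

open FForm V4

section Refutation

variable {I : ℕ → V4} {φ : FForm} {Γ₁ Γ₂ Γ₃ Γ₄ : Finset FForm}

@[simp]
lemma fAntiRefutedBy_insert₁ :
    FAntiRefutedBy I (insert φ Γ₁) Γ₂ Γ₃ Γ₄ ↔ φ.val I ≠ .f ∧ FAntiRefutedBy I Γ₁ Γ₂ Γ₃ Γ₄ := by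
  simp only [FAntiRefutedBy, Finset.forall_mem_insert, and_assoc]

@[simp]
lemma fAntiRefutedBy_insert₂ :
    FAntiRefutedBy I Γ₁ (insert φ Γ₂) Γ₃ Γ₄ ↔ φ.val I ≠ .n ∧ FAntiRefutedBy I Γ₁ Γ₂ Γ₃ Γ₄ := by
  simp only [FAntiRefutedBy, Finset.forall_mem_insert]; tauto

@[simp]
lemma fAntiRefutedBy_insert₃ :
    FAntiRefutedBy I Γ₁ Γ₂ (insert φ Γ₃) Γ₄ ↔ φ.val I ≠ .b ∧ FAntiRefutedBy I Γ₁ Γ₂ Γ₃ Γ₄ := by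
  simp only [FAntiRefutedBy, Finset.forall_mem_insert]; tauto

@[simp]
lemma fAntiRefutedBy_insert₄ :
    FAntiRefutedBy I Γ₁ Γ₂ Γ₃ (insert φ Γ₄) ↔ φ.val I ≠ .t ∧ FAntiRefutedBy I Γ₁ Γ₂ Γ₃ Γ₄ := by
  simp only [FAntiRefutedBy, Finset.forall_mem_insert]; tauto

end Refutation

def axiomInterp (Γ₁ Γ₂ Γ₃ : Finset FForm) (p : ℕ) : V4 :=
  if atom p ∉ Γ₁ then .f else if atom p ∉ Γ₂ then .n else if atom p ∉ Γ₃ then .b else .t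

lemma fAntiRefutedBy_axiomInterp {Γ₁ Γ₂ Γ₃ Γ₄ : Finset FForm}
    (hbasic : ∀ φ ∈ Γ₁ ∪ Γ₂ ∪ Γ₃ ∪ Γ₄, φ.IsBasic) (hdisj : Γ₁ ∩ Γ₂ ∩ Γ₃ ∩ Γ₄ = ∅)
    (hN : nn ∉ Γ₂) (hB : bb ∉ Γ₃) :
    FAntiRefutedBy (axiomInterp Γ₁ Γ₂ Γ₃) Γ₁ Γ₂ Γ₃ Γ₄ := by
  have hatom : ∀ p, atom p ∈ Γ₁ → atom p ∈ Γ₂ → atom p ∈ Γ₃ → atom p ∉ Γ₄ := fun p h₁ h₂ h₃ h₄ =>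
    Finset.notMem_empty (atom p) (hdisj ▸ by simp [h₁, h₂, h₃, h₄])
  refine ⟨?_, ?_, ?_, ?_⟩ <;> intro φ hφ <;>
    obtain ⟨p, rfl⟩ | rfl | rfl := isBasic_iff.1 (hbasic φ (by simp [hφ])) <;>
    simp only [val, axiomInterp] <;> (try split_ifs) <;> simp_all

theorem RF.refutable {Γ₁ Γ₂ Γ₃ Γ₄ : Finset FForm} (h : RF Γ₁ Γ₂ Γ₃ Γ₄) :
    FAntiRefutable Γ₁ Γ₂ Γ₃ Γ₄ := by
  induction h with
  | ax _ _ _ _ hbasic hdisj hN hB => exact ⟨_, fAntiRefutedBy_axiomInterp hbasic hdisj hN hB⟩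
  | _ =>
    obtain ⟨I, hI⟩ := ‹FAntiRefutable _ _ _ _›
    refine ⟨I, ?_⟩
    simp only [fAntiRefutedBy_insert₁, fAntiRefutedBy_insert₂, fAntiRefutedBy_insert₃,
      fAntiRefutedBy_insert₄, val, negv_ne_f_iff, negv_ne_n_iff, negv_ne_b_iff, negv_ne_t_iff,
      conjv_ne_f_iff, conjv_ne_n_iff, conjv_ne_b_iff, conjv_ne_t_iff, impv_ne_f_iff,
      impv_ne_n_iff, impv_ne_b_iff, impv_ne_t_iff] at hI ⊢
    tauto

lemma Finset.sum_insert_le {α M : Type*} [DecidableEq α] [AddCommMonoid M] [PartialOrder M]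
    [CanonicallyOrderedAdd M] (f : α → M) (a : α) (s : Finset α) :
    ∑ x ∈ insert a s, f x ≤ f a + ∑ x ∈ s, f x := by
  by_cases ha : a ∈ s
  · rw [Finset.insert_eq_of_mem ha]; exact le_add_self
  · rw [Finset.sum_insert ha]

def seqWeight (Γ₁ Γ₂ Γ₃ Γ₄ : Finset FForm) : ℕ :=
  ∑ φ ∈ Γ₁, φ.weight + ∑ φ ∈ Γ₂, φ.weight + ∑ φ ∈ Γ₃, φ.weight + ∑ φ ∈ Γ₄, φ.weight

section Completeness

variable {I : ℕ → V4} {φ : FForm} {Γ₁ Γ₂ Γ₃ Γ₄ : Finset FForm}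

lemma seqWeight_eq_add_erase₁ (h : φ ∈ Γ₁) :
    seqWeight Γ₁ Γ₂ Γ₃ Γ₄ = φ.weight + seqWeight (Γ₁.erase φ) Γ₂ Γ₃ Γ₄ := by
  rw [seqWeight, seqWeight, ← Finset.add_sum_erase _ _ h]
  ring

lemma seqWeight_eq_add_erase₂ (h : φ ∈ Γ₂) :
    seqWeight Γ₁ Γ₂ Γ₃ Γ₄ = φ.weight + seqWeight Γ₁ (Γ₂.erase φ) Γ₃ Γ₄ := by
  rw [seqWeight, seqWeight, ← Finset.add_sum_erase _ _ h]
  ring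

lemma seqWeight_eq_add_erase₃ (h : φ ∈ Γ₃) :
    seqWeight Γ₁ Γ₂ Γ₃ Γ₄ = φ.weight + seqWeight Γ₁ Γ₂ (Γ₃.erase φ) Γ₄ := by
  rw [seqWeight, seqWeight, ← Finset.add_sum_erase _ _ h]
  ring

lemma seqWeight_eq_add_erase₄ (h : φ ∈ Γ₄) :
    seqWeight Γ₁ Γ₂ Γ₃ Γ₄ = φ.weight + seqWeight Γ₁ Γ₂ Γ₃ (Γ₄.erase φ) := by
  rw [seqWeight, seqWeight, ← Finset.add_sum_erase _ _ h]
  ring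

lemma RF.ax_of_fAntiRefutedBy (hbasic : ∀ φ ∈ Γ₁ ∪ Γ₂ ∪ Γ₃ ∪ Γ₄, φ.IsBasic)
    (h : FAntiRefutedBy I Γ₁ Γ₂ Γ₃ Γ₄) : RF Γ₁ Γ₂ Γ₃ Γ₄ := by
  obtain ⟨h₁, h₂, h₃, h₄⟩ := h
  refine .ax _ _ _ _ hbasic ?_ (fun hN => h₂ _ hN rfl) (fun hB => h₃ _ hB rfl)
  refine Finset.eq_empty_of_forall_notMem fun φ hφ => ?_
  simp only [Finset.mem_inter] at hφ
  cases hv : φ.val I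
  exacts [h₁ _ hφ.1.1.1 hv, h₂ _ hφ.1.1.2 hv, h₃ _ hφ.1.2 hv, h₄ _ hφ.2 hv]

section Decomposition

variable (ih : ∀ Δ₁ Δ₂ Δ₃ Δ₄, FAntiRefutedBy I Δ₁ Δ₂ Δ₃ Δ₄ →
    seqWeight Δ₁ Δ₂ Δ₃ Δ₄ < φ.weight + seqWeight Γ₁ Γ₂ Γ₃ Γ₄ → RF Δ₁ Δ₂ Δ₃ Δ₄)
include ih

lemma RF.insert₁_of_fAntiRefutedBy (hφ : ¬φ.IsBasic)
    (h : FAntiRefutedBy I (insert φ Γ₁) Γ₂ Γ₃ Γ₄) :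
    RF (insert φ Γ₁) Γ₂ Γ₃ Γ₄ := by
  obtain ⟨hv, h⟩ := fAntiRefutedBy_insert₁.1 h
  rcases φ with _ | _ | _ | χ | ⟨χ, ξ⟩ | ⟨χ, ξ⟩
  case' atom | bb | nn => exact absurd trivial hφ
  case' neg =>
    rw [val, negv_ne_f_iff] at hv
    refine .negF (ih _ _ _ _ (by simp [*]) ?_)
  case' conj =>
    rcases (conjv_ne_f_iff _ _).1 hv with ⟨h₁, h₂, h₃, h₄⟩ | ⟨h₁, h₂, h₃, h₄⟩
    case' inl => refine .conjF1 (ih _ _ _ _ (by simp [*]) ?_)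
    case' inr => refine .conjF2 (ih _ _ _ _ (by simp [*]) ?_)
  case' imp =>
    rcases (impv_ne_f_iff _ _).1 hv with ⟨h₁, h₂⟩ | h₁
    case' inl => refine .impF1 (ih _ _ _ _ (by simp [*]) ?_)
    case' inr => refine .impF2 (ih _ _ _ _ (by simp [*]) ?_)
  all_goals
    simp only [seqWeight, weight]
    repeat grw [Finset.sum_insert_le]
    omega

lemma RF.insert₂_of_fAntiRefutedBy (hφ : ¬φ.IsBasic)
    (h : FAntiRefutedBy I Γ₁ (insert φ Γ₂) Γ₃ Γ₄) :
    RF Γ₁ (insert φ Γ₂) Γ₃ Γ₄ := by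
  obtain ⟨hv, h⟩ := fAntiRefutedBy_insert₂.1 h
  rcases φ with _ | _ | _ | χ | ⟨χ, ξ⟩ | ⟨χ, ξ⟩
  case' atom | bb | nn => exact absurd trivial hφ
  case' neg =>
    rw [val, negv_ne_n_iff] at hv
    refine .negN (ih _ _ _ _ (by simp [*]) ?_)
  case' conj =>
    rcases (conjv_ne_n_iff _ _).1 hv with ⟨h₁, h₂⟩ | ⟨h₁, h₂⟩ | ⟨h₁, h₂⟩
    case' inl => refine .conjN1 (ih _ _ _ _ (by simp [*]) ?_)
    case' inr.inl => refine .conjN2 (ih _ _ _ _ (by simp [*]) ?_)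
    case' inr.inr => refine .conjN3 (ih _ _ _ _ (by simp [*]) ?_)
  case' imp =>
    rcases (impv_ne_n_iff _ _).1 hv with ⟨h₁, h₂⟩ | h₁
    case' inl => refine .impN1 (ih _ _ _ _ (by simp [*]) ?_)
    case' inr => refine .impN2 (ih _ _ _ _ (by simp [*]) ?_)
  all_goals
    simp only [seqWeight, weight]
    repeat grw [Finset.sum_insert_le]
    omega

lemma RF.insert₃_of_fAntiRefutedBy (hφ : ¬φ.IsBasic)
    (h : FAntiRefutedBy I Γ₁ Γ₂ (insert φ Γ₃) Γ₄) :
    RF Γ₁ Γ₂ (insert φ Γ₃) Γ₄ := by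
  obtain ⟨hv, h⟩ := fAntiRefutedBy_insert₃.1 h
  rcases φ with _ | _ | _ | χ | ⟨χ, ξ⟩ | ⟨χ, ξ⟩
  case' atom | bb | nn => exact absurd trivial hφ
  case' neg =>
    rw [val, negv_ne_b_iff] at hv
    refine .negB (ih _ _ _ _ (by simp [*]) ?_)
  case' conj =>
    rcases (conjv_ne_b_iff _ _).1 hv with ⟨h₁, h₂⟩ | ⟨h₁, h₂⟩ | ⟨h₁, h₂⟩
    case' inl => refine .conjB1 (ih _ _ _ _ (by simp [*]) ?_)
    case' inr.inl => refine .conjB2 (ih _ _ _ _ (by simp [*]) ?_)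
    case' inr.inr => refine .conjB3 (ih _ _ _ _ (by simp [*]) ?_)
  case' imp =>
    rcases (impv_ne_b_iff _ _).1 hv with ⟨h₁, h₂⟩ | h₁
    case' inl => refine .impB1 (ih _ _ _ _ (by simp [*]) ?_)
    case' inr => refine .impB2 (ih _ _ _ _ (by simp [*]) ?_)
  all_goals
    simp only [seqWeight, weight]
    repeat grw [Finset.sum_insert_le]
    omega

lemma RF.insert₄_of_fAntiRefutedBy (hφ : ¬φ.IsBasic)
    (h : FAntiRefutedBy I Γ₁ Γ₂ Γ₃ (insert φ Γ₄)) :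
    RF Γ₁ Γ₂ Γ₃ (insert φ Γ₄) := by
  obtain ⟨hv, h⟩ := fAntiRefutedBy_insert₄.1 h
  rcases φ with _ | _ | _ | χ | ⟨χ, ξ⟩ | ⟨χ, ξ⟩
  case' atom | bb | nn => exact absurd trivial hφ
  case' neg =>
    rw [val, negv_ne_t_iff] at hv
    refine .negT (ih _ _ _ _ (by simp [*]) ?_)
  case' conj =>
    rcases (conjv_ne_t_iff _ _).1 hv with h₁ | h₁
    case' inl => refine .conjT1 (ih _ _ _ _ (by simp [*]) ?_)
    case' inr => refine .conjT2 (ih _ _ _ _ (by simp [*]) ?_)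
  case' imp =>
    obtain ⟨h₁, h₂, h₃⟩ := (impv_ne_t_iff _ _).1 hv
    refine .impT (ih _ _ _ _ (by simp [*]) ?_)
  all_goals
    simp only [seqWeight, weight]
    repeat grw [Finset.sum_insert_le]
    omega

end Decomposition

theorem RF.of_fAntiRefutedBy {Γ₁ Γ₂ Γ₃ Γ₄ : Finset FForm} (h : FAntiRefutedBy I Γ₁ Γ₂ Γ₃ Γ₄) :
    RF Γ₁ Γ₂ Γ₃ Γ₄ := by
  by_cases hbasic : ∀ φ ∈ Γ₁ ∪ Γ₂ ∪ Γ₃ ∪ Γ₄, φ.IsBasic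
  · exact .ax_of_fAntiRefutedBy hbasic h
  obtain ⟨φ, hφ, hφb⟩ := not_forall₂.1 hbasic
  have ih : ∀ Δ₁ Δ₂ Δ₃ Δ₄, FAntiRefutedBy I Δ₁ Δ₂ Δ₃ Δ₄ →
      seqWeight Δ₁ Δ₂ Δ₃ Δ₄ < seqWeight Γ₁ Γ₂ Γ₃ Γ₄ → RF Δ₁ Δ₂ Δ₃ Δ₄ :=
    fun _ _ _ _ hΔ _ => RF.of_fAntiRefutedBy hΔ
  simp only [Finset.mem_union] at hφ
  rcases hφ with ((hφ | hφ) | hφ) | hφ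
  · rw [← Finset.insert_erase hφ] at h ⊢
    exact .insert₁_of_fAntiRefutedBy (seqWeight_eq_add_erase₁ hφ ▸ ih) hφb h
  · rw [← Finset.insert_erase hφ] at h ⊢
    exact .insert₂_of_fAntiRefutedBy (seqWeight_eq_add_erase₂ hφ ▸ ih) hφb h
  · rw [← Finset.insert_erase hφ] at h ⊢
    exact .insert₃_of_fAntiRefutedBy (seqWeight_eq_add_erase₃ hφ ▸ ih) hφb h
  · rw [← Finset.insert_erase hφ] at h ⊢
    exact .insert₄_of_fAntiRefutedBy (seqWeight_eq_add_erase₄ hφ ▸ ih) hφb h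
termination_by seqWeight Γ₁ Γ₂ Γ₃ Γ₄

end Completeness

/-- Adequacy of the anti-sequent calculus `R_F`: an F-anti-sequent
`Γ₁ ∤ Γ₂ ∤ Γ₃ ∤ Γ₄` is provable in `R_F` iff it is refutable. -/
theorem RF_adequate (Γ₁ Γ₂ Γ₃ Γ₄ : Finset FForm) :
    RF Γ₁ Γ₂ Γ₃ Γ₄ ↔ FAntiRefutable Γ₁ Γ₂ Γ₃ Γ₄ :=
  ⟨RF.refutable, fun ⟨_, h⟩ => .of_fAntiRefutedBy h⟩
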